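/- arXiv:2603.21113 — 3 statements merged into one kernel-verified Lean document; each statement's English description precedes it below -/
import Mathlib

section
/- Sphere integral estimate (Lemma 5.2, part 1): Let d ≥ 2 and 0 < b < d−1. There exists a constant C > 0 such that for all r > 0 and all p ∈ ℝ^d: ∫_{S^{d−1}} e^{−‖ru − p‖} · ‖ru − p‖^{−b} dσ(u) ≤ C · e^{−|r − ‖p‖|/2} / (r^b + r^{d−1}). -/
/-!
Write `D u = ‖r • u - p‖`. Since `D u ≥ |r - ‖p‖|`, half of the exponential can be pulled out as
`exp (-|r - ‖p‖| / 2)`, and it remains to bound `∫ exp (-D / 2) * D ^ (-b) dσ` by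
`C / (r ^ b + r ^ (d - 1))`. The only geometric input is the cap estimate
`σ {D ≤ t} ≤ c * (t / r) ^ (d - 1)`, obtained from polar coordinates. Summing over the dyadic
shells of `D`, it yields `∫ D ^ (-b) dσ ≤ C / r ^ b` (cut at `D = r`; beyond, `D ^ (-b) ≤ r ^ (-b)`)
and `∫ exp (-D / 2) * D ^ (-b) dσ ≤ C / r ^ (d - 1)` (cut at `D = 1`; beyond,
`exp (-D / 2) ≤ k! 2 ^ k D ^ (-k)` with `k > d - 1`). The smaller of the two bounds is at most
`2 C / (r ^ b + r ^ (d - 1))`.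
-/

open MeasureTheory Metric Set Filter Topology ENNReal Module
open scoped ENNReal NNReal

section DyadicShells

variable {X : Type*} [MeasurableSpace X] {σ : Measure X} {D : X → ℝ} {A m : ℝ}

theorem setLIntegral_le_tsum_mul_measure {S : Set X} {f : X → ℝ≥0∞} {E : ℕ → Set X}
    (hE : ∀ j, MeasurableSet (E j)) (a : ℕ → ℝ≥0∞)
    (hf : ∀ᵐ x ∂σ, x ∈ S → ∃ j, x ∈ E j ∧ f x ≤ a j) :
    ∫⁻ x in S, f x ∂σ ≤ ∑' j, a j * σ (E j) := by
  have hmeas : ∀ j, Measurable ((E j).indicator fun _ => a j) :=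
    fun j => measurable_const.indicator (hE j)
  calc ∫⁻ x in S, f x ∂σ ≤ ∫⁻ x in S, ∑' j, (E j).indicator (fun _ => a j) x ∂σ := by
        refine setLIntegral_mono_ae (Measurable.tsum hmeas).aemeasurable ?_
        filter_upwards [hf] with x hx hxS
        obtain ⟨j, hxj, hfx⟩ := hx hxS
        exact hfx.trans ((indicator_of_mem hxj (fun _ => a j)).symm.le.trans (ENNReal.le_tsum j))
    _ ≤ ∫⁻ x, ∑' j, (E j).indicator (fun _ => a j) x ∂σ := setLIntegral_le_lintegral _ _
    _ = ∑' j, a j * σ (E j) := by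
        rw [lintegral_tsum fun j => (hmeas j).aemeasurable]
        simp only [lintegral_indicator_const (hE _)]

theorem measure_setOf_le_zero_eq_zero
    (hσ : ∀ t > 0, σ {x | D x ≤ t} ≤ ENNReal.ofReal (A * t ^ m)) (hm : 0 < m) :
    σ {x | D x ≤ 0} = 0 := by
  have hlim : Tendsto (fun t : ℝ => ENNReal.ofReal (A * t ^ m)) (𝓝[>] 0) (𝓝 0) := by
    have : Tendsto (fun t : ℝ => A * t ^ m) (𝓝[>] 0) (𝓝 (A * 0 ^ m)) :=
      ((continuousAt_const.mul (Real.continuousAt_rpow_const 0 m (Or.inr hm.le))).tendsto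
        ).mono_left nhdsWithin_le_nhds
    simpa [Real.zero_rpow hm.ne'] using ENNReal.tendsto_ofReal this
  refine le_antisymm (ge_of_tendsto hlim ?_) bot_le
  filter_upwards [self_mem_nhdsWithin] with t ht
  exact (measure_mono fun x (hx : D x ≤ 0) => hx.trans (le_of_lt ht)).trans (hσ t ht)

theorem setLIntegral_rpow_neg_le_tsum (hD : Measurable D)
    (hσ : ∀ t > 0, σ {x | D x ≤ t} ≤ ENNReal.ofReal (A * t ^ m)) {β : ℝ} (hβ : 0 ≤ β)
    {S : Set X} {ρ : ℕ → ℝ} (hρ : ∀ j, 0 < ρ j)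
    (hS : ∀ᵐ x ∂σ, x ∈ S → ∃ j, ρ j / 2 ≤ D x ∧ D x ≤ ρ j) :
    ∫⁻ x in S, ENNReal.ofReal (D x) ^ (-β) ∂σ
      ≤ ∑' j, ENNReal.ofReal (A * 2 ^ β * ρ j ^ (m - β)) := by
  calc ∫⁻ x in S, ENNReal.ofReal (D x) ^ (-β) ∂σ
      ≤ ∑' j, ENNReal.ofReal ((ρ j / 2) ^ (-β)) * σ {x | D x ≤ ρ j} := by
        refine setLIntegral_le_tsum_mul_measure (fun j => hD measurableSet_Iic) _ ?_
        filter_upwards [hS] with x hx hxS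
        obtain ⟨j, hlow, hup⟩ := hx hxS
        have hpos : 0 < ρ j / 2 := half_pos (hρ j)
        refine ⟨j, hup, ?_⟩
        rw [ENNReal.ofReal_rpow_of_pos (hpos.trans_le hlow)]
        exact ENNReal.ofReal_le_ofReal (Real.rpow_le_rpow_of_nonpos hpos hlow (neg_nonpos.2 hβ))
    _ ≤ ∑' j, ENNReal.ofReal ((ρ j / 2) ^ (-β)) * ENNReal.ofReal (A * ρ j ^ m) :=
        ENNReal.tsum_le_tsum fun j => mul_le_mul_right (hσ _ (hρ j)) _
    _ = ∑' j, ENNReal.ofReal (A * 2 ^ β * ρ j ^ (m - β)) := by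
        congr 1 with j
        have hρ0 := hρ j
        rw [← ENNReal.ofReal_mul (by positivity), Real.div_rpow hρ0.le zero_le_two,
          Real.rpow_neg zero_le_two, sub_eq_add_neg, Real.rpow_add hρ0]
        field_simp

theorem tsum_ofReal_mul_rpow_geometric {c T q s : ℝ} (hc : 0 ≤ c) (hT : 0 < T) (hq : 0 < q)
    (hqs : q ^ s < 1) :
    ∑' j : ℕ, ENNReal.ofReal (c * (T * q ^ j) ^ s) = ENNReal.ofReal (c * T ^ s / (1 - q ^ s)) := by
  have hqs0 : 0 ≤ q ^ s := Real.rpow_nonneg hq.le s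
  have hterm : ∀ j : ℕ, c * (T * q ^ j) ^ s = c * T ^ s * (q ^ s) ^ j := fun j => by
    rw [Real.mul_rpow hT.le (pow_nonneg hq.le j), Real.rpow_pow_comm hq.le, mul_assoc]
  simp only [hterm]
  rw [← ENNReal.ofReal_tsum_of_nonneg (fun j => by positivity)
    ((summable_geometric_of_lt_one hqs0 hqs).mul_left _), tsum_mul_left,
    tsum_geometric_of_lt_one hqs0 hqs, div_eq_mul_inv]

theorem setLIntegral_setOf_le_rpow_neg_le (hD : Measurable D)
    (hσ : ∀ t > 0, σ {x | D x ≤ t} ≤ ENNReal.ofReal (A * t ^ m)) (hA : 0 ≤ A) {β T : ℝ}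
    (hβ : 0 ≤ β) (hβm : β < m) (hT : 0 < T) :
    ∫⁻ x in {x | D x ≤ T}, ENNReal.ofReal (D x) ^ (-β) ∂σ
      ≤ ENNReal.ofReal (A * 2 ^ β * T ^ (m - β) / (1 - 2⁻¹ ^ (m - β))) := by
  have hpos : ∀ᵐ x ∂σ, 0 < D x := by
    simpa [ae_iff] using measure_setOf_le_zero_eq_zero hσ (hβ.trans_lt hβm)
  calc ∫⁻ x in {x | D x ≤ T}, ENNReal.ofReal (D x) ^ (-β) ∂σ
      ≤ ∑' j : ℕ, ENNReal.ofReal (A * 2 ^ β * (T * 2⁻¹ ^ j) ^ (m - β)) := by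
        refine setLIntegral_rpow_neg_le_tsum hD hσ hβ (fun j => by positivity) ?_
        filter_upwards [hpos] with x hx0 (hxT : D x ≤ T)
        obtain ⟨j, hj, hj'⟩ := exists_nat_pow_near ((one_le_div hx0).2 hxT) one_lt_two
        refine ⟨j, ?_, ?_⟩
        · rw [div_lt_iff₀ hx0, mul_comm] at hj'
          rw [inv_pow, ← div_eq_mul_inv, div_div, ← pow_succ]
          exact (div_le_iff₀ (by positivity)).2 hj'.le
        · rw [le_div_iff₀ hx0, mul_comm] at hj
          rw [inv_pow, ← div_eq_mul_inv]
          exact (le_div_iff₀ (by positivity)).2 hj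
    _ = _ := tsum_ofReal_mul_rpow_geometric (by positivity) hT (by norm_num)
        (Real.rpow_lt_one (by norm_num) (by norm_num) (sub_pos.2 hβm))

theorem setLIntegral_setOf_lt_rpow_neg_le (hD : Measurable D)
    (hσ : ∀ t > 0, σ {x | D x ≤ t} ≤ ENNReal.ofReal (A * t ^ m)) (hA : 0 ≤ A) {γ T : ℝ}
    (hγ : 0 ≤ γ) (hmγ : m < γ) (hT : 0 < T) :
    ∫⁻ x in {x | T < D x}, ENNReal.ofReal (D x) ^ (-γ) ∂σ
      ≤ ENNReal.ofReal (A * 2 ^ m * T ^ (m - γ) / (1 - 2 ^ (m - γ))) := by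
  have hconst : A * 2 ^ γ * (2 * T) ^ (m - γ) = A * 2 ^ m * T ^ (m - γ) := by
    rw [Real.mul_rpow zero_le_two hT.le, ← mul_assoc, mul_assoc A, ← Real.rpow_add two_pos,
      add_sub_cancel]
  rw [← hconst]
  calc ∫⁻ x in {x | T < D x}, ENNReal.ofReal (D x) ^ (-γ) ∂σ
      ≤ ∑' j : ℕ, ENNReal.ofReal (A * 2 ^ γ * (2 * T * 2 ^ j) ^ (m - γ)) := by
        refine setLIntegral_rpow_neg_le_tsum hD hσ hγ (fun j => by positivity) ?_
        refine Eventually.of_forall fun x (hTx : T < D x) => ?_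
        obtain ⟨j, hj, hj'⟩ :=
          exists_nat_pow_near ((one_le_div hT).2 hTx.le) (one_lt_two (α := ℝ))
        refine ⟨j, ?_, ?_⟩
        · rw [le_div_iff₀ hT] at hj
          linarith
        · rw [div_lt_iff₀ hT, pow_succ] at hj'
          linarith
    _ = _ := tsum_ofReal_mul_rpow_geometric (by positivity) (by positivity) two_pos
        (Real.rpow_lt_one_of_one_lt_of_neg one_lt_two (sub_neg.2 hmγ))

theorem lintegral_rpow_neg_le (hD : Measurable D)
    (hσ : ∀ t > 0, σ {x | D x ≤ t} ≤ ENNReal.ofReal (A * t ^ m)) (hA : 0 ≤ A) {β T : ℝ}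
    (hβ : 0 ≤ β) (hβm : β < m) (hT : 0 < T) :
    ∫⁻ x, ENNReal.ofReal (D x) ^ (-β) ∂σ
      ≤ ENNReal.ofReal (A * 2 ^ β * T ^ (m - β) / (1 - 2⁻¹ ^ (m - β)))
        + ENNReal.ofReal (T ^ (-β)) * σ univ := by
  rw [← lintegral_add_compl _ (hD measurableSet_Iic : MeasurableSet {x | D x ≤ T})]
  refine add_le_add (setLIntegral_setOf_le_rpow_neg_le hD hσ hA hβ hβm hT) ?_
  calc ∫⁻ x in {x | D x ≤ T}ᶜ, ENNReal.ofReal (D x) ^ (-β) ∂σ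
      ≤ ∫⁻ _ in {x | D x ≤ T}ᶜ, ENNReal.ofReal (T ^ (-β)) ∂σ := by
        refine setLIntegral_mono' (hD measurableSet_Iic).compl fun x hx => ?_
        have hTx : T < D x := not_le.1 hx
        rw [ENNReal.ofReal_rpow_of_pos (hT.trans hTx)]
        exact ENNReal.ofReal_le_ofReal (Real.rpow_le_rpow_of_nonpos hT hTx.le (neg_nonpos.2 hβ))
    _ ≤ ENNReal.ofReal (T ^ (-β)) * σ univ := by
        rw [setLIntegral_const]
        exact mul_le_mul_right (measure_mono (subset_univ _)) _

theorem exp_neg_half_le_factorial_mul_rpow_neg (k : ℕ) {x : ℝ} (hx : 0 < x) :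
    Real.exp (-(x / 2)) ≤ k.factorial * 2 ^ k * x ^ (-(k : ℝ)) := by
  have h := Real.pow_div_factorial_le_exp (x / 2) (by positivity) k
  rw [Real.exp_neg, Real.rpow_neg hx.le, Real.rpow_natCast]
  calc (Real.exp (x / 2))⁻¹ ≤ ((x / 2) ^ k / k.factorial)⁻¹ := inv_anti₀ (by positivity) h
    _ = k.factorial * 2 ^ k * (x ^ k)⁻¹ := by rw [div_pow]; field_simp

theorem ofReal_exp_neg_half_mul_rpow_neg_le (k : ℕ) {β x : ℝ} (hβ : 0 ≤ β) (hx : 1 ≤ x) :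
    ENNReal.ofReal (Real.exp (-(x / 2))) * ENNReal.ofReal x ^ (-β)
      ≤ ENNReal.ofReal (k.factorial * 2 ^ k) * ENNReal.ofReal x ^ (-(k : ℝ)) := by
  have hx0 : 0 < x := one_pos.trans_le hx
  rw [ENNReal.ofReal_rpow_of_pos hx0, ENNReal.ofReal_rpow_of_pos hx0,
    ← ENNReal.ofReal_mul (by positivity), ← ENNReal.ofReal_mul (by positivity)]
  refine ENNReal.ofReal_le_ofReal ((mul_le_of_le_one_right (Real.exp_pos _).le ?_).trans
    (exp_neg_half_le_factorial_mul_rpow_neg k hx0))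
  exact Real.rpow_le_one_of_one_le_of_nonpos hx (neg_nonpos.2 hβ)

theorem lintegral_exp_neg_half_mul_rpow_neg_le (hD : Measurable D)
    (hσ : ∀ t > 0, σ {x | D x ≤ t} ≤ ENNReal.ofReal (A * t ^ m)) (hA : 0 ≤ A) {β : ℝ}
    (hβ : 0 ≤ β) (hβm : β < m) {k : ℕ} (hk : m < k) :
    ∫⁻ x, ENNReal.ofReal (Real.exp (-(D x / 2))) * ENNReal.ofReal (D x) ^ (-β) ∂σ
      ≤ ENNReal.ofReal (A * (2 ^ β / (1 - 2⁻¹ ^ (m - β))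
          + k.factorial * 2 ^ k * 2 ^ m / (1 - 2 ^ (m - k)))) := by
  have hpos : ∀ᵐ x ∂σ, 0 < D x := by
    simpa [ae_iff] using measure_setOf_le_zero_eq_zero hσ (hβ.trans_lt hβm)
  have hnear : ∫⁻ x in {x | D x ≤ 1},
      ENNReal.ofReal (Real.exp (-(D x / 2))) * ENNReal.ofReal (D x) ^ (-β) ∂σ
        ≤ ENNReal.ofReal (A * 2 ^ β / (1 - 2⁻¹ ^ (m - β))) := by
    calc _ ≤ ∫⁻ x in {x | D x ≤ 1}, ENNReal.ofReal (D x) ^ (-β) ∂σ := by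
          refine setLIntegral_mono_ae (by fun_prop) ?_
          filter_upwards [hpos] with x hx _
          refine mul_le_of_le_one_left zero_le (ENNReal.ofReal_le_one.2 ?_)
          exact Real.exp_le_one_iff.2 (by linarith)
      _ ≤ _ := by simpa using setLIntegral_setOf_le_rpow_neg_le hD hσ hA hβ hβm one_pos
  have hfar : ∫⁻ x in {x | D x ≤ 1}ᶜ,
      ENNReal.ofReal (Real.exp (-(D x / 2))) * ENNReal.ofReal (D x) ^ (-β) ∂σ
        ≤ ENNReal.ofReal (k.factorial * 2 ^ k)
          * ENNReal.ofReal (A * 2 ^ m / (1 - 2 ^ (m - k))) := by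
    rw [show {x | D x ≤ 1}ᶜ = {x | 1 < D x} by ext; simp]
    calc _ ≤ ∫⁻ x in {x | 1 < D x},
            ENNReal.ofReal (k.factorial * 2 ^ k) * ENNReal.ofReal (D x) ^ (-(k : ℝ)) ∂σ :=
          setLIntegral_mono' (hD measurableSet_Ioi) fun x (hx : 1 < D x) =>
            ofReal_exp_neg_half_mul_rpow_neg_le k hβ hx.le
      _ = ENNReal.ofReal (k.factorial * 2 ^ k)
            * ∫⁻ x in {x | 1 < D x}, ENNReal.ofReal (D x) ^ (-(k : ℝ)) ∂σ :=
          lintegral_const_mul' _ _ ofReal_ne_top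
      _ ≤ _ := by
          gcongr
          simpa using setLIntegral_setOf_lt_rpow_neg_le hD hσ hA (Nat.cast_nonneg k) hk one_pos
  have hnear_pos : 0 < 1 - (2⁻¹ : ℝ) ^ (m - β) :=
    sub_pos.2 (Real.rpow_lt_one (by norm_num) (by norm_num) (sub_pos.2 hβm))
  have hfar_pos : 0 < 1 - (2 : ℝ) ^ (m - k) :=
    sub_pos.2 (Real.rpow_lt_one_of_one_lt_of_neg one_lt_two (sub_neg.2 hk))
  rw [← lintegral_add_compl _ (hD measurableSet_Iic : MeasurableSet {x | D x ≤ 1})]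
  refine (add_le_add hnear hfar).trans_eq ?_
  rw [← ENNReal.ofReal_mul (by positivity), ← ENNReal.ofReal_add (by positivity) (by positivity)]
  congr 1
  ring

end DyadicShells

theorem min_div_le_two_mul_div_add {C x y : ℝ} (hC : 0 ≤ C) (hx : 0 < x) (hy : 0 < y) :
    min (C / x) (C / y) ≤ 2 * C / (x + y) := by
  rcases le_total y x with h | h
  · calc min (C / x) (C / y) ≤ C / x := min_le_left _ _
      _ = 2 * C / (x + x) := by field_simp; ring
      _ ≤ 2 * C / (x + y) := div_le_div_of_nonneg_left (by positivity) (by positivity) (by linarith)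
  · calc min (C / x) (C / y) ≤ C / y := min_le_right _ _
      _ = 2 * C / (y + y) := by field_simp; ring
      _ ≤ 2 * C / (x + y) := div_le_div_of_nonneg_left (by positivity) (by positivity) (by linarith)

section NormedSpace

variable {E : Type*} [NormedAddCommGroup E] [NormedSpace ℝ E]

theorem norm_sub_lt_two_mul_of_norm_inv_norm_smul_sub_le {x q : E} {s : ℝ}
    (hq : ‖‖x‖⁻¹ • x - q‖ ≤ s) (h1 : 1 < ‖x‖) (h2 : ‖x‖ < 1 + s) : ‖x - q‖ < 2 * s := by
  have hx : ‖x - ‖x‖⁻¹ • x‖ = ‖x‖ - 1 := by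
    rw [show x - ‖x‖⁻¹ • x = (1 - ‖x‖⁻¹) • x by rw [sub_smul, one_smul], norm_smul,
      Real.norm_of_nonneg (sub_nonneg.2 (inv_le_one_of_one_le₀ h1.le)), sub_mul, one_mul,
      inv_mul_cancel₀ (by positivity)]
  calc ‖x - q‖ ≤ ‖x - ‖x‖⁻¹ • x‖ + ‖‖x‖⁻¹ • x - q‖ := norm_sub_le_norm_sub_add_norm_sub _ _ _
    _ < 2 * s := by linarith

theorem abs_sub_norm_le_norm_smul_sub {u : E} (hu : ‖u‖ = 1) {r : ℝ} (hr : 0 ≤ r) (p : E) :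
    |r - ‖p‖| ≤ ‖r • u - p‖ := by
  simpa [norm_smul, abs_of_nonneg hr, hu] using abs_norm_sub_norm_le (r • u) p

end NormedSpace

section SphereEstimates

variable {E : Type*} [NormedAddCommGroup E] [NormedSpace ℝ E] [FiniteDimensional ℝ E]
  [MeasurableSpace E] [BorelSpace E] (μ : Measure E) [μ.IsAddHaarMeasure]

/-- In polar coordinates `x ↦ (x / ‖x‖, ‖x‖)` the shell over the cap with radii in `(1, 1 + s)`
has measure at least `s` times that of the cap, and it lies in the ball `ball q (2 * s)`. -/
theorem toSphere_setOf_norm_sub_le [Nontrivial E] (q : E) {s : ℝ} (hs : 0 < s) :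
    μ.toSphere {u | ‖(u : E) - q‖ ≤ s}
      ≤ ENNReal.ofReal (2 ^ finrank ℝ E * μ.real (ball 0 1) * s ^ ((finrank ℝ E : ℝ) - 1)) := by
  set C : Set (sphere (0 : E) 1) := {u | ‖(u : E) - q‖ ≤ s}
  set J : Set (Ioi (0 : ℝ)) := Subtype.val ⁻¹' Ioo 1 (1 + s)
  have hC : MeasurableSet C := (isClosed_le (by fun_prop) continuous_const).measurableSet
  have hJ : MeasurableSet J := measurable_subtype_coe measurableSet_Ioo
  have hJ_ge : ENNReal.ofReal s ≤ Measure.volumeIoiPow (finrank ℝ E - 1) J := by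
    rw [Measure.volumeIoiPow, withDensity_apply _ hJ]
    calc ENNReal.ofReal s = ∫⁻ _ in J, 1 ∂(volume.comap Subtype.val) := by
          rw [setLIntegral_one, comap_subtype_coe_apply measurableSet_Ioi,
            Subtype.image_preimage_coe,
            inter_eq_right.2 (Ioo_subset_Ioi_self.trans (Ioi_subset_Ioi zero_le_one)),
            Real.volume_Ioo, add_sub_cancel_left]
      _ ≤ _ := setLIntegral_mono' hJ fun t ht => ENNReal.one_le_ofReal.2 (one_le_pow₀ ht.1.le)
  have hshell : μ.toSphere C * Measure.volumeIoiPow (finrank ℝ E - 1) J ≤ μ (ball q (2 * s)) := by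
    rw [← Measure.prod_prod, ← (μ.measurePreserving_homeomorphUnitSphereProd).measure_preimage
      (hC.prod hJ).nullMeasurableSet,
      comap_subtype_coe_apply (measurableSet_singleton 0).compl]
    refine measure_mono ?_
    rintro _ ⟨x, hx, rfl⟩
    simp only [mem_preimage, mem_prod, C, J, mem_ofPred_eq, mem_Ioo,
      homeomorphUnitSphereProd_apply_fst_coe, homeomorphUnitSphereProd_apply_snd_coe] at hx
    exact mem_ball_iff_norm.2 (norm_sub_lt_two_mul_of_norm_inv_norm_smul_sub_le hx.1 hx.2.1 hx.2.2)
  refine (ENNReal.mul_le_mul_iff_left (ENNReal.ofReal_pos.2 hs).ne' ENNReal.ofReal_ne_top).1 ?_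
  calc μ.toSphere C * ENNReal.ofReal s
      ≤ μ (ball q (2 * s)) := (mul_le_mul_right hJ_ge _).trans hshell
    _ = _ := by
      rw [μ.addHaar_ball q (by positivity), ← ofReal_measureReal,
        ← ENNReal.ofReal_mul (by positivity),
        ← ENNReal.ofReal_mul (by positivity), Real.rpow_sub_one hs.ne', Real.rpow_natCast]
      congr 1
      field_simp
      ring

theorem toSphere_setOf_norm_smul_sub_le [Nontrivial E] {r : ℝ} (hr : 0 < r) (p : E) {t : ℝ}
    (ht : 0 < t) :
    μ.toSphere {u | ‖r • (u : E) - p‖ ≤ t}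
      ≤ ENNReal.ofReal (2 ^ finrank ℝ E * μ.real (ball 0 1) / r ^ ((finrank ℝ E : ℝ) - 1)
          * t ^ ((finrank ℝ E : ℝ) - 1)) := by
  have hnorm : ∀ v : E, ‖r • v - p‖ = r * ‖v - r⁻¹ • p‖ := fun v => by
    rw [← smul_inv_smul₀ hr.ne' p, ← smul_sub, inv_smul_smul₀ hr.ne', norm_smul,
      Real.norm_of_nonneg hr.le]
  have hset : {u : sphere (0 : E) 1 | ‖r • (u : E) - p‖ ≤ t}
      = {u : sphere (0 : E) 1 | ‖(u : E) - r⁻¹ • p‖ ≤ t / r} := by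
    ext u
    rw [mem_ofPred_eq, mem_ofPred_eq, hnorm, le_div_iff₀ hr, mul_comm]
  rw [hset, ← mul_div_right_comm, mul_div_assoc, ← Real.div_rpow ht.le hr.le]
  exact toSphere_setOf_norm_sub_le μ _ (div_pos ht hr)

variable {b : ℝ}

theorem lintegral_toSphere_rpow_neg_le (hb0 : 0 ≤ b) (hbn : b < (finrank ℝ E : ℝ) - 1) :
    ∃ C, 0 < C ∧ ∀ r, 0 < r → ∀ p : E,
      ∫⁻ u, ENNReal.ofReal ‖r • (u : E) - p‖ ^ (-b) ∂μ.toSphere ≤ ENNReal.ofReal (C / r ^ b) := by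
  have : Nontrivial E := Module.nontrivial_of_finrank_pos (R := ℝ)
    (by exact_mod_cast (by linarith : (0 : ℝ) < finrank ℝ E))
  have hq : 0 < 1 - (2⁻¹ : ℝ) ^ ((finrank ℝ E : ℝ) - 1 - b) :=
    sub_pos.2 (Real.rpow_lt_one (by norm_num) (by norm_num) (sub_pos.2 hbn))
  have hM : 0 < μ.toSphere.real univ := by
    have : 0 < μ.real (ball (0 : E) 1) :=
      ENNReal.toReal_pos (measure_ball_pos μ 0 one_pos).ne' measure_ball_lt_top.ne
    have : 0 < finrank ℝ E := finrank_pos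
    rw [Measure.toSphere_real_apply_univ]
    positivity
  refine ⟨2 ^ finrank ℝ E * μ.real (ball 0 1) * 2 ^ b / (1 - 2⁻¹ ^ ((finrank ℝ E : ℝ) - 1 - b))
    + μ.toSphere.real univ, add_pos_of_nonneg_of_pos (div_nonneg (by positivity) hq.le) hM,
    fun r hr p => ?_⟩
  refine (lintegral_rpow_neg_le (by fun_prop)
    (fun t ht => toSphere_setOf_norm_smul_sub_le μ hr p ht) (by positivity) hb0 hbn hr).trans_eq ?_
  rw [← ofReal_measureReal, ← ENNReal.ofReal_mul (by positivity),
    ← ENNReal.ofReal_add (div_nonneg (by positivity) hq.le) (by positivity),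
    Real.rpow_sub hr ((finrank ℝ E : ℝ) - 1) b, Real.rpow_neg hr.le]
  congr 1
  field_simp

theorem lintegral_toSphere_exp_neg_half_mul_rpow_neg_le (hb0 : 0 ≤ b)
    (hbn : b < (finrank ℝ E : ℝ) - 1) :
    ∃ C, ∀ r, 0 < r → ∀ p : E,
      ∫⁻ u, ENNReal.ofReal (Real.exp (-(‖r • (u : E) - p‖ / 2))) *
          ENNReal.ofReal ‖r • (u : E) - p‖ ^ (-b) ∂μ.toSphere
        ≤ ENNReal.ofReal (C / r ^ ((finrank ℝ E : ℝ) - 1)) := by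
  have : Nontrivial E := Module.nontrivial_of_finrank_pos (R := ℝ)
    (by exact_mod_cast (by linarith : (0 : ℝ) < finrank ℝ E))
  obtain ⟨k, hk⟩ := exists_nat_gt ((finrank ℝ E : ℝ) - 1)
  let K : ℝ := 2 ^ b / (1 - 2⁻¹ ^ ((finrank ℝ E : ℝ) - 1 - b))
    + k.factorial * 2 ^ k * 2 ^ ((finrank ℝ E : ℝ) - 1) / (1 - 2 ^ ((finrank ℝ E : ℝ) - 1 - k))
  refine ⟨2 ^ finrank ℝ E * μ.real (ball 0 1) * K, fun r hr p => ?_⟩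
  refine (lintegral_exp_neg_half_mul_rpow_neg_le (by fun_prop)
    (fun t ht => toSphere_setOf_norm_smul_sub_le μ hr p ht) (by positivity) hb0 hbn hk).trans_eq ?_
  rw [div_mul_eq_mul_div]

theorem lintegral_toSphere_exp_neg_half_mul_rpow_neg_le_div_add (hb0 : 0 ≤ b)
    (hbn : b < (finrank ℝ E : ℝ) - 1) :
    ∃ C, 0 < C ∧ ∀ r, 0 < r → ∀ p : E,
      ∫⁻ u, ENNReal.ofReal (Real.exp (-(‖r • (u : E) - p‖ / 2))) *
          ENNReal.ofReal ‖r • (u : E) - p‖ ^ (-b) ∂μ.toSphere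
        ≤ ENNReal.ofReal (C / (r ^ b + r ^ ((finrank ℝ E : ℝ) - 1))) := by
  obtain ⟨C₁, hC₁, h₁⟩ := lintegral_toSphere_rpow_neg_le μ hb0 hbn
  obtain ⟨C₂, h₂⟩ := lintegral_toSphere_exp_neg_half_mul_rpow_neg_le μ hb0 hbn
  have hC : 0 < max C₁ C₂ := lt_max_of_lt_left hC₁
  refine ⟨2 * max C₁ C₂, by positivity, fun r hr p => ?_⟩
  have hrb : 0 < r ^ b := Real.rpow_pos_of_pos hr _
  have hrm : 0 < r ^ ((finrank ℝ E : ℝ) - 1) := Real.rpow_pos_of_pos hr _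
  have hnear := calc
    ∫⁻ u, ENNReal.ofReal (Real.exp (-(‖r • (u : E) - p‖ / 2))) *
        ENNReal.ofReal ‖r • (u : E) - p‖ ^ (-b) ∂μ.toSphere
      ≤ ∫⁻ u, ENNReal.ofReal ‖r • (u : E) - p‖ ^ (-b) ∂μ.toSphere := by
        refine lintegral_mono fun u => mul_le_of_le_one_left zero_le (ENNReal.ofReal_le_one.2 ?_)
        exact Real.exp_le_one_iff.2 (by linarith [norm_nonneg (r • (u : E) - p)])
    _ ≤ ENNReal.ofReal (max C₁ C₂ / r ^ b) := (h₁ r hr p).trans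
        (ENNReal.ofReal_le_ofReal (div_le_div_of_nonneg_right (le_max_left _ _) hrb.le))
  have hfar := (h₂ r hr p).trans
    (ENNReal.ofReal_le_ofReal (div_le_div_of_nonneg_right (le_max_right C₁ C₂) hrm.le))
  calc _ ≤ min (ENNReal.ofReal (max C₁ C₂ / r ^ b))
          (ENNReal.ofReal (max C₁ C₂ / r ^ ((finrank ℝ E : ℝ) - 1))) := le_min hnear hfar
    _ = ENNReal.ofReal (min (max C₁ C₂ / r ^ b) (max C₁ C₂ / r ^ ((finrank ℝ E : ℝ) - 1))) :=
        (ENNReal.ofReal_min _ _).symm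
    _ ≤ _ := ENNReal.ofReal_le_ofReal (min_div_le_two_mul_div_add hC.le hrb hrm)

theorem lintegral_toSphere_exp_neg_mul_rpow_neg_le (hb0 : 0 ≤ b)
    (hbn : b < (finrank ℝ E : ℝ) - 1) :
    ∃ C, 0 < C ∧ ∀ r, 0 < r → ∀ p : E,
      ∫⁻ u, ENNReal.ofReal (Real.exp (-‖r • (u : E) - p‖)) *
          ENNReal.ofReal ‖r • (u : E) - p‖ ^ (-b) ∂μ.toSphere
        ≤ ENNReal.ofReal
            (C * Real.exp (-|r - ‖p‖| / 2) / (r ^ b + r ^ ((finrank ℝ E : ℝ) - 1))) := by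
  obtain ⟨C, hC, hbound⟩ := lintegral_toSphere_exp_neg_half_mul_rpow_neg_le_div_add μ hb0 hbn
  refine ⟨C, hC, fun r hr p => ?_⟩
  calc _ ≤ ∫⁻ u, ENNReal.ofReal (Real.exp (-|r - ‖p‖| / 2)) *
          (ENNReal.ofReal (Real.exp (-(‖r • (u : E) - p‖ / 2))) *
            ENNReal.ofReal ‖r • (u : E) - p‖ ^ (-b)) ∂μ.toSphere := by
        refine lintegral_mono fun u => ?_
        have := abs_sub_norm_le_norm_smul_sub (norm_eq_of_mem_sphere u) hr.le p
        rw [← mul_assoc, ← ENNReal.ofReal_mul (Real.exp_pos _).le, ← Real.exp_add]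
        gcongr
        linarith
    _ = ENNReal.ofReal (Real.exp (-|r - ‖p‖| / 2)) *
          ∫⁻ u, ENNReal.ofReal (Real.exp (-(‖r • (u : E) - p‖ / 2))) *
            ENNReal.ofReal ‖r • (u : E) - p‖ ^ (-b) ∂μ.toSphere :=
        lintegral_const_mul' _ _ ofReal_ne_top
    _ ≤ _ := by
        grw [hbound r hr p, ← ENNReal.ofReal_mul (Real.exp_pos _).le, mul_div_assoc', mul_comm]

end SphereEstimates

theorem sphere_integral_estimate_general
    (d : ℕ) (b : ℝ) (hb0 : 0 < b) (hbd : b < (d : ℝ) - 1) :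
    ∃ C : ℝ, 0 < C ∧ ∀ (r : ℝ), 0 < r → ∀ p : EuclideanSpace ℝ (Fin d),
      (∫⁻ u : sphere (0 : EuclideanSpace ℝ (Fin d)) 1,
          ENNReal.ofReal (Real.exp (-‖r • (u : EuclideanSpace ℝ (Fin d)) - p‖)) *
            (ENNReal.ofReal ‖r • (u : EuclideanSpace ℝ (Fin d)) - p‖) ^ (-b)
          ∂((volume : Measure (EuclideanSpace ℝ (Fin d))).toSphere))
      ≤ ENNReal.ofReal (C * Real.exp (-|r - ‖p‖| / 2) / (r ^ b + r ^ ((d : ℝ) - 1))) := by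
  have h := lintegral_toSphere_exp_neg_mul_rpow_neg_le (volume : Measure (EuclideanSpace ℝ (Fin d)))
    hb0.le (by simpa using hbd)
  rwa [finrank_euclideanSpace_fin] at h

/-- Lemma 5.2, part 1: sphere integral estimate. The surface measure on the unit sphere
`S^{d-1}` is realized as `(volume).toSphere`. -/
theorem sphere_integral_estimate
    (d : ℕ) (hd : 2 ≤ d) (b : ℝ) (hb0 : 0 < b) (hbd : b < (d : ℝ) - 1) :
    ∃ C : ℝ, 0 < C ∧ ∀ (r : ℝ), 0 < r → ∀ p : EuclideanSpace ℝ (Fin d),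
      (∫⁻ u : sphere (0 : EuclideanSpace ℝ (Fin d)) 1,
          ENNReal.ofReal (Real.exp (-‖r • (u : EuclideanSpace ℝ (Fin d)) - p‖)) *
            (ENNReal.ofReal ‖r • (u : EuclideanSpace ℝ (Fin d)) - p‖) ^ (-b)
          ∂((volume : Measure (EuclideanSpace ℝ (Fin d))).toSphere))
      ≤ ENNReal.ofReal (C * Real.exp (-|r - ‖p‖| / 2) / (r ^ b + r ^ ((d : ℝ) - 1))) :=
  sphere_integral_estimate_general d b hb0 hbd
end

section
/- Uniform one-dimensional exponential-singular integral bound (final step in the proof of Lemma 5.2): For every τ > 0 and every α, β ≥ 0 with α < 1 and α + β < 1, one has sup_{y ∈ ℝ} ∫_0^∞ e^{−τ|t−y|} · t^{−β} · |t−y|^{−α} dt < ∞. -/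
/-!
With `γ = α + β`, the product `t^{-β} |t - y|^{-α}` is at most `min(t, |t - y|)^{-γ}`, hence at
most `t^{-γ} + |t - y|^{-γ}`, and `t^{-γ} ≤ 1_{(0,1)}(t) t^{-γ} + 1`. As `e^{-τ|t - y|} ≤ 1`, the
integrand is bounded by `1_{(0,1)}(t) t^{-γ} + k(t - y)` with `k(s) = e^{-τ|s|} (1 + |s|^{-γ})`.
Both functions are integrable over `ℝ` because `γ < 1`, and by translation invariance the bound
does not depend on `y`.
-/

open MeasureTheory Real Set
open scoped ENNReal

namespace ENNReal

lemma rpow_mul_rpow_le_rpow_add_rpow (a b : ℝ≥0∞) {x y : ℝ} (hx : 0 ≤ x) (hy : 0 ≤ y) :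
    a ^ x * b ^ y ≤ a ^ (x + y) + b ^ (x + y) :=
  calc a ^ x * b ^ y ≤ max a b ^ x * max a b ^ y := by gcongr <;> simp
    _ = max a b ^ (x + y) := (rpow_add_of_nonneg _ _ hx hy).symm
    _ ≤ a ^ (x + y) + b ^ (x + y) := by rcases le_total a b with h | h <;> simp [h]

lemma rpow_neg_mul_rpow_neg_le_rpow_neg_add_rpow_neg (a b : ℝ≥0∞) {x y : ℝ} (hx : 0 ≤ x)
    (hy : 0 ≤ y) : a ^ (-x) * b ^ (-y) ≤ a ^ (-(x + y)) + b ^ (-(x + y)) := by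
  simp only [rpow_neg, ← inv_rpow]
  exact rpow_mul_rpow_le_rpow_add_rpow _ _ hx hy

lemma ofReal_rpow_neg_le_indicator_add_one {t γ : ℝ} (ht : 0 < t) (hγ : 0 ≤ γ) :
    ENNReal.ofReal t ^ (-γ) ≤ (Ioo 0 1).indicator (fun s ↦ ENNReal.ofReal s ^ (-γ)) t + 1 := by
  by_cases ht1 : t < 1
  · rw [indicator_of_mem (show t ∈ Ioo 0 1 from ⟨ht, ht1⟩)]
    exact le_self_add
  · rw [indicator_of_notMem (fun h ↦ ht1 h.2), zero_add, rpow_neg, ← inv_rpow]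
    refine rpow_le_one (ENNReal.inv_le_one.2 ?_) hγ
    simpa using not_lt.1 ht1

end ENNReal

theorem lintegral_comp_abs (f : ℝ → ℝ≥0∞) :
    ∫⁻ x, f |x| = 2 * ∫⁻ x in Ioi 0, f x := by
  have hIoi : ∫⁻ x in Ioi 0, f |x| = ∫⁻ x in Ioi 0, f x :=
    setLIntegral_congr_fun measurableSet_Ioi fun x hx ↦ by rw [abs_of_pos hx]
  have hIic : ∫⁻ x in Iic 0, f |x| = ∫⁻ x in Ioi 0, f x :=
    calc ∫⁻ x in Iic 0, f |x| = ∫⁻ x in Iic 0, f (-x) :=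
          setLIntegral_congr_fun measurableSet_Iic fun x hx ↦ by rw [abs_of_nonpos hx]
      _ = ∫⁻ x in Ici 0, f x := by
          simpa using (Measure.measurePreserving_neg volume).setLIntegral_comp_preimage_emb
            (MeasurableEquiv.neg ℝ).measurableEmbedding f (Ici 0)
      _ = ∫⁻ x in Ioi 0, f x := setLIntegral_congr Ioi_ae_eq_Ici.symm
  rw [← lintegral_add_compl _ measurableSet_Ioi, compl_Ioi, hIoi, hIic, two_mul]

lemma setLIntegral_ofReal_rpow_neg_Ioo_lt_top {γ : ℝ} (hγ : γ < 1) :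
    ∫⁻ t in Ioo 0 1, ENNReal.ofReal t ^ (-γ) < ∞ := by
  have hint : IntegrableOn (fun t : ℝ ↦ t ^ (-γ)) (Ioo 0 1) :=
    (intervalIntegral.integrableOn_Ioo_rpow_iff one_pos).2 (by linarith)
  refine lt_of_eq_of_lt (setLIntegral_congr_fun measurableSet_Ioo fun t ht ↦ ?_)
    hint.lintegral_lt_top
  exact ENNReal.ofReal_rpow_of_pos ht.1

noncomputable def expSingularKernel (τ γ r : ℝ) : ℝ≥0∞ :=
  ENNReal.ofReal (exp (-(τ * r))) * (1 + ENNReal.ofReal r ^ (-γ))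

@[fun_prop]
lemma measurable_expSingularKernel (τ γ : ℝ) : Measurable (expSingularKernel τ γ) := by
  unfold expSingularKernel
  fun_prop

lemma setLIntegral_expSingularKernel_Ioi_lt_top {τ γ : ℝ} (hτ : 0 < τ) (hγ : γ < 1) :
    ∫⁻ r in Ioi 0, expSingularKernel τ γ r < ∞ := by
  have hint : IntegrableOn (fun r : ℝ ↦ exp (-(τ * r)) * (1 + r ^ (-γ))) (Ioi 0) := by
    have hexp := exp_neg_integrableOn_Ioi 0 hτ
    have hsing := integrableOn_rpow_mul_exp_neg_mul_rpow (p := 1) (s := -γ) (by linarith) one_pos hτ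
    refine (hexp.add hsing).congr_fun (fun r _ ↦ ?_) measurableSet_Ioi
    simp only [rpow_one, Pi.add_apply]
    ring_nf
  refine lt_of_eq_of_lt (setLIntegral_congr_fun measurableSet_Ioi fun r hr ↦ ?_)
    hint.lintegral_lt_top
  rw [expSingularKernel, ENNReal.ofReal_mul (exp_nonneg _),
    ENNReal.ofReal_add zero_le_one (rpow_nonneg hr.le _), ENNReal.ofReal_one,
    ENNReal.ofReal_rpow_of_pos hr]

lemma lintegral_expSingularKernel_abs_lt_top {τ γ : ℝ} (hτ : 0 < τ) (hγ : γ < 1) :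
    ∫⁻ s, expSingularKernel τ γ |s| < ∞ := by
  rw [lintegral_comp_abs]
  exact ENNReal.mul_lt_top ENNReal.ofNat_lt_top (setLIntegral_expSingularKernel_Ioi_lt_top hτ hγ)

lemma exp_mul_rpow_neg_mul_rpow_neg_le {τ α β t : ℝ} (hτ : 0 ≤ τ) (hα : 0 ≤ α) (hβ : 0 ≤ β)
    (ht : 0 < t) (y : ℝ) :
    ENNReal.ofReal (exp (-(τ * |t - y|))) * ENNReal.ofReal t ^ (-β) *
        ENNReal.ofReal |t - y| ^ (-α) ≤
      (Ioo 0 1).indicator (fun s ↦ ENNReal.ofReal s ^ (-(α + β))) t +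
        expSingularKernel τ (α + β) |t - y| := by
  set E := ENNReal.ofReal (exp (-(τ * |t - y|)))
  set g := (Ioo 0 1).indicator (fun s ↦ ENNReal.ofReal s ^ (-(α + β))) t
  have hE : E ≤ 1 := ENNReal.ofReal_le_one.2 (exp_le_one_iff.2 (neg_nonpos.2 (by positivity)))
  calc E * ENNReal.ofReal t ^ (-β) * ENNReal.ofReal |t - y| ^ (-α)
      ≤ E * (ENNReal.ofReal t ^ (-(α + β)) + ENNReal.ofReal |t - y| ^ (-(α + β))) := by
        rw [mul_assoc, add_comm α]
        gcongr
        exact ENNReal.rpow_neg_mul_rpow_neg_le_rpow_neg_add_rpow_neg _ _ hβ hα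
    _ ≤ E * (g + 1 + ENNReal.ofReal |t - y| ^ (-(α + β))) := by
        gcongr
        exact ENNReal.ofReal_rpow_neg_le_indicator_add_one ht (add_nonneg hα hβ)
    _ ≤ g + E * (1 + ENNReal.ofReal |t - y| ^ (-(α + β))) := by
        rw [add_assoc, mul_add]
        gcongr
        exact mul_le_of_le_one_left' hE

theorem uniform_one_dim_exponential_singular_bound_general
    (τ α β : ℝ) (hτ : 0 < τ) (hα : 0 ≤ α) (hβ : 0 ≤ β) (hαβ : α + β < 1) :
    (⨆ y : ℝ, ∫⁻ t in Set.Ioi (0 : ℝ),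
      ENNReal.ofReal (Real.exp (-(τ * |t - y|))) * (ENNReal.ofReal t) ^ (-β) *
        (ENNReal.ofReal |t - y|) ^ (-α)) < ⊤ := by
  set g := (Ioo (0 : ℝ) 1).indicator fun s ↦ ENNReal.ofReal s ^ (-(α + β))
  set k := fun s ↦ expSingularKernel τ (α + β) |s|
  have hg : Measurable g := (by fun_prop : Measurable _).indicator measurableSet_Ioo
  have hbound : ∀ y, ∫⁻ t in Ioi 0, ENNReal.ofReal (exp (-(τ * |t - y|))) *
      ENNReal.ofReal t ^ (-β) * ENNReal.ofReal |t - y| ^ (-α) ≤ (∫⁻ t, g t) + ∫⁻ s, k s := fun y ↦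
    calc _ ≤ ∫⁻ t in Ioi 0, (g t + k (t - y)) :=
          setLIntegral_mono (by fun_prop) fun t ht ↦
            exp_mul_rpow_neg_mul_rpow_neg_le hτ.le hα hβ ht y
      _ ≤ ∫⁻ t, (g t + k (t - y)) := setLIntegral_le_lintegral _ _
      _ = (∫⁻ t, g t) + ∫⁻ s, k s := by
          rw [lintegral_add_left hg, lintegral_sub_right_eq_self k y]
  refine (iSup_le hbound).trans_lt (ENNReal.add_lt_top.2 ⟨?_, ?_⟩)
  · rw [lintegral_indicator measurableSet_Ioo]
    exact setLIntegral_ofReal_rpow_neg_Ioo_lt_top hαβ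
  · exact lintegral_expSingularKernel_abs_lt_top hτ hαβ

/-- Uniform one-dimensional exponential-singular integral bound (final step in the proof of
Lemma 5.2). The integrand takes values in `[0,∞]` (it is `∞` at the singularities). -/
theorem uniform_one_dim_exponential_singular_bound
    (τ α β : ℝ) (hτ : 0 < τ) (hα : 0 ≤ α) (hβ : 0 ≤ β) (hα1 : α < 1) (hαβ : α + β < 1) :
    (⨆ y : ℝ, ∫⁻ t in Set.Ioi (0 : ℝ),
      ENNReal.ofReal (Real.exp (-(τ * |t - y|))) * (ENNReal.ofReal t) ^ (-β) *
        (ENNReal.ofReal |t - y|) ^ (-α)) < ⊤ :=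
  uniform_one_dim_exponential_singular_bound_general τ α β hτ hα hβ hαβ
end

section
/- Weighted convolution tail estimate (the analytic content of Lemma 4.1): Let b ≥ 0 and let g, ε : ℝ → [0,∞] be measurable with M = ∫_ℝ (1+|τ|)^b g(τ) dτ < ∞. Then for every r ≥ 0: ∫_r^∞ ( ∫_ℝ g(τ) ε(t−τ) dτ ) dt ≤ 2^b M [ ∫_{−∞}^0 (1+|t|+r)^{−b} ε(t) dt + (1+r)^{−b} ∫_0^∞ ε(t) dt + ∫_{r/2}^∞ ε(t) dt ]. -/
/-!
Tonelli and translation turn the left-hand side into `∫ g(τ) · ∫_{r-τ}^∞ ε`. For each `τ` the inner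
tail is at most `(2(1+|τ|))^b` times the bracket on the right: if `τ ≤ r/2` it is part of
`∫_{r/2}^∞ ε`; otherwise `τ > 0`, and on `(r-τ, 0]` the weight satisfies `1+|t|+r ≤ 1+τ`, while
`1+r < 2(1+τ)` controls `∫_0^∞ ε`. Integrating against `g` produces `2^b M`.
-/

open MeasureTheory Set
open scoped ENNReal

noncomputable section

lemma setLIntegral_Ioi_comp_sub_right (f : ℝ → ℝ≥0∞) (r τ : ℝ) :
    ∫⁻ t in Ioi r, f (t - τ) = ∫⁻ s in Ioi (r - τ), f s := by
  have h := (measurePreserving_sub_right volume τ).setLIntegral_comp_preimage_emb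
    (MeasurableEquiv.subRight τ).measurableEmbedding f (Ioi (r - τ))
  rwa [show (· - τ) ⁻¹' Ioi (r - τ) = Ioi r by ext; simp] at h

lemma setLIntegral_Ioi_lintegral_mul_comp_sub {g ε : ℝ → ℝ≥0∞} (hg : Measurable g)
    (hε : Measurable ε) (r : ℝ) :
    ∫⁻ t in Ioi r, ∫⁻ τ, g τ * ε (t - τ) = ∫⁻ τ, g τ * ∫⁻ s in Ioi (r - τ), ε s := by
  have hmeas : Measurable fun p : ℝ × ℝ => g p.2 * ε (p.1 - p.2) := by fun_prop
  rw [lintegral_lintegral_swap hmeas.aemeasurable]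
  refine lintegral_congr fun τ => ?_
  rw [lintegral_const_mul _ (by fun_prop), setLIntegral_Ioi_comp_sub_right]

lemma one_le_rpow_mul_rpow_neg {x y b : ℝ} (hx : 0 < x) (hxy : x ≤ y) (hb : 0 ≤ b) :
    1 ≤ y ^ b * x ^ (-b) := by
  rw [Real.rpow_neg hx.le, ← div_eq_mul_inv, one_le_div (by positivity)]
  exact Real.rpow_le_rpow hx.le hxy hb

lemma ENNReal.le_ofReal_mul_ofReal_mul {a c : ℝ} (ha : 0 ≤ a) (h : 1 ≤ a * c) (e : ℝ≥0∞) :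
    e ≤ ENNReal.ofReal a * (ENNReal.ofReal c * e) := by
  rw [← mul_assoc, ← ENNReal.ofReal_mul ha]
  exact le_mul_of_one_le_left' (ENNReal.one_le_ofReal.2 h)

def tailMajorant (b : ℝ) (ε : ℝ → ℝ≥0∞) (r : ℝ) : ℝ≥0∞ :=
  (∫⁻ t in Iic (0 : ℝ), ENNReal.ofReal ((1 + |t| + r) ^ (-b)) * ε t) +
    ENNReal.ofReal ((1 + r) ^ (-b)) * (∫⁻ t in Ioi (0 : ℝ), ε t) + ∫⁻ t in Ioi (r / 2), ε t

lemma setLIntegral_Ioi_sub_le_tailMajorant {b r : ℝ} (hb : 0 ≤ b) (hr : 0 ≤ r)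
    (ε : ℝ → ℝ≥0∞) (τ : ℝ) :
    ∫⁻ s in Ioi (r - τ), ε s ≤ ENNReal.ofReal ((2 * (1 + |τ|)) ^ b) * tailMajorant b ε r := by
  set W := ENNReal.ofReal ((2 * (1 + |τ|)) ^ b)
  have hW : 1 ≤ W :=
    ENNReal.one_le_ofReal.2 (Real.one_le_rpow (by linarith [abs_nonneg τ]) hb)
  rcases le_or_gt τ (r / 2) with hτ | hτ
  · calc ∫⁻ s in Ioi (r - τ), ε s ≤ ∫⁻ s in Ioi (r / 2), ε s :=
          lintegral_mono_set (Ioi_subset_Ioi (by linarith))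
      _ ≤ tailMajorant b ε r := le_add_self
      _ ≤ W * tailMajorant b ε r := le_mul_of_one_le_left' hW
  have habsτ : |τ| = τ := abs_of_pos (by linarith)
  have hneg : ∫⁻ s in Ioi (r - τ) ∩ Iic 0, ε s
      ≤ W * ∫⁻ t in Iic (0 : ℝ), ENNReal.ofReal ((1 + |t| + r) ^ (-b)) * ε t := by
    rw [← lintegral_const_mul' _ _ ENNReal.ofReal_ne_top]
    refine (setLIntegral_mono' (measurableSet_Ioi.inter measurableSet_Iic) ?_).trans
      (lintegral_mono_set inter_subset_right)
    rintro s ⟨hs, hs0⟩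
    refine ENNReal.le_ofReal_mul_ofReal_mul (by positivity)
      (one_le_rpow_mul_rpow_neg (by positivity) ?_ hb) _
    rw [abs_of_nonpos hs0, habsτ]
    linarith [mem_Ioi.1 hs]
  have hpos : ∫⁻ t in Ioi (0 : ℝ), ε t
      ≤ W * (ENNReal.ofReal ((1 + r) ^ (-b)) * ∫⁻ t in Ioi (0 : ℝ), ε t) :=
    ENNReal.le_ofReal_mul_ofReal_mul (by positivity)
      (one_le_rpow_mul_rpow_neg (by positivity) (by rw [habsτ]; linarith) hb) _
  have hcover : Ioi (r - τ) ⊆ (Ioi (r - τ) ∩ Iic 0) ∪ Ioi 0 := fun s hs =>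
    (le_or_gt s 0).imp (fun h => ⟨hs, h⟩) id
  calc ∫⁻ s in Ioi (r - τ), ε s
      ≤ (∫⁻ s in Ioi (r - τ) ∩ Iic 0, ε s) + ∫⁻ t in Ioi (0 : ℝ), ε t :=
        (lintegral_mono_set hcover).trans (lintegral_union_le _ _ _)
    _ ≤ W * ((∫⁻ t in Iic (0 : ℝ), ENNReal.ofReal ((1 + |t| + r) ^ (-b)) * ε t) +
          ENNReal.ofReal ((1 + r) ^ (-b)) * ∫⁻ t in Ioi (0 : ℝ), ε t) := by
        rw [mul_add]
        exact add_le_add hneg hpos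
    _ ≤ W * tailMajorant b ε r := mul_le_mul_right le_self_add W

theorem weighted_convolution_tail_estimate_general
    (b : ℝ) (hb : 0 ≤ b) (g ε : ℝ → ℝ≥0∞) (hg : Measurable g) (hε : Measurable ε)
    (M : ℝ≥0∞) (hM : M = ∫⁻ τ : ℝ, ENNReal.ofReal ((1 + |τ|) ^ b) * g τ)
    (r : ℝ) (hr : 0 ≤ r) :
    (∫⁻ t in Set.Ioi r, ∫⁻ τ : ℝ, g τ * ε (t - τ))
      ≤ ENNReal.ofReal (2 ^ b) * M *
        ((∫⁻ t in Set.Iic (0 : ℝ), ENNReal.ofReal ((1 + |t| + r) ^ (-b)) * ε t) +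
          ENNReal.ofReal ((1 + r) ^ (-b)) * (∫⁻ t in Set.Ioi (0 : ℝ), ε t) +
          ∫⁻ t in Set.Ioi (r / 2), ε t) := by
  change _ ≤ ENNReal.ofReal (2 ^ b) * M * tailMajorant b ε r
  have hweight (τ : ℝ) : ENNReal.ofReal ((2 * (1 + |τ|)) ^ b)
      = ENNReal.ofReal (2 ^ b) * ENNReal.ofReal ((1 + |τ|) ^ b) := by
    rw [Real.mul_rpow zero_le_two (by positivity), ENNReal.ofReal_mul (by positivity)]
  rw [setLIntegral_Ioi_lintegral_mul_comp_sub hg hε]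
  calc ∫⁻ τ, g τ * ∫⁻ s in Ioi (r - τ), ε s
      ≤ ∫⁻ τ, g τ * (ENNReal.ofReal ((2 * (1 + |τ|)) ^ b) * tailMajorant b ε r) :=
        lintegral_mono fun τ => mul_le_mul_right (setLIntegral_Ioi_sub_le_tailMajorant hb hr ε τ) _
    _ = ∫⁻ τ, ENNReal.ofReal (2 ^ b) * tailMajorant b ε r *
          (ENNReal.ofReal ((1 + |τ|) ^ b) * g τ) :=
        lintegral_congr fun τ => by rw [hweight]; ring
    _ = ENNReal.ofReal (2 ^ b) * M * tailMajorant b ε r := by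
        rw [lintegral_const_mul _ (by fun_prop), hM]; ring

/-- Weighted convolution tail estimate: the analytic content of Lemma 4.1. -/
theorem weighted_convolution_tail_estimate
    (b : ℝ) (hb : 0 ≤ b) (g ε : ℝ → ℝ≥0∞) (hg : Measurable g) (hε : Measurable ε)
    (M : ℝ≥0∞) (hM : M = ∫⁻ τ : ℝ, ENNReal.ofReal ((1 + |τ|) ^ b) * g τ) (hMfin : M < ⊤)
    (r : ℝ) (hr : 0 ≤ r) :
    (∫⁻ t in Set.Ioi r, ∫⁻ τ : ℝ, g τ * ε (t - τ))
      ≤ ENNReal.ofReal (2 ^ b) * M *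
        ((∫⁻ t in Set.Iic (0 : ℝ), ENNReal.ofReal ((1 + |t| + r) ^ (-b)) * ε t) +
          ENNReal.ofReal ((1 + r) ^ (-b)) * (∫⁻ t in Set.Ioi (0 : ℝ), ε t) +
          ∫⁻ t in Set.Ioi (r / 2), ε t) :=
  weighted_convolution_tail_estimate_general b hb g ε hg hε M hM r hr
end
end
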